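/- arXiv:2107.01227 — 2 statements merged into one kernel-verified Lean document; each statement's English description precedes it below -/
import Mathlib

section
/- An ultragraph 𝒢 satisfies Condition (Y) if and only if for every infinite path e₁e₂e₃… in 𝒢 and every natural number m ≥ 1 there exist k ∈ ℕ and a finite path α of length k + m with s(e_{k+1}) ∈ r(α), so that α e_{k+1} e_{k+2} … is again an infinite path of 𝒢. -/
/-- An ultragraph: a source map `src : E → V` and a range map assigning to each
edge a nonempty set of vertices. -/
structure Ultragraph (V : Type) (E : Type) : Type where
  src : E → V
  rng : E → Set V
  rng_nonempty : ∀ e, (rng e).Nonempty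

namespace Ultragraph

variable {V E : Type}

/-- A finite path: a (possibly empty) list of edges with compatible transitions. -/
def IsPath (G : Ultragraph V E) (es : List E) : Prop :=
  es.Chain' fun e f => G.src f ∈ G.rng e

/-- An infinite path. -/
def IsInfinitePath (G : Ultragraph V E) (p : ℕ → E) : Prop :=
  ∀ i : ℕ, G.src (p (i + 1)) ∈ G.rng (p i)

/-- Condition (Y). -/
def ConditionY (G : Ultragraph V E) : Prop :=
  ∀ p : ℕ → E, G.IsInfinitePath p →
    ∃ (k : ℕ) (α : List E) (hα : α ≠ []),
      α.length = k + 1 ∧ G.IsPath α ∧ G.src (p k) ∈ G.rng (α.getLast hα)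

/-- The collection 𝒢⁰ of generalized vertices: the smallest collection of subsets of `V`
containing the singletons and the ranges of edges, closed under finite unions and finite
intersections (the empty set is included for convenience; `p_∅ = 0`). -/
inductive InG0 (G : Ultragraph V E) : Set V → Prop
  | vertex (v : V) : InG0 G {v}
  | range (e : E) : InG0 G (G.rng e)
  | union {A B : Set V} : InG0 G A → InG0 G B → InG0 G (A ∪ B)
  | inter {A B : Set V} : InG0 G A → InG0 G B → InG0 G (A ∩ B)

/-- Generators of the Leavitt path algebra. -/
inductive LPAGen (G : Ultragraph V E) : Type
  | edge : E → LPAGen G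
  | star : E → LPAGen G
  | proj : (A : Set V) → G.InG0 A → LPAGen G

/-- The directed graph `E_𝒢` associated to an ultragraph, viewed again as an ultragraph
whose edge ranges are singletons. -/
def toGraph (G : Ultragraph V E) : Ultragraph V {q : E × V // q.2 ∈ G.rng q.1} where
  src q := G.src q.1.1
  rng q := {q.1.2}
  rng_nonempty q := ⟨q.1.2, rfl⟩

variable (R : Type) [CommRing R] (G : Ultragraph V E)

/-- The free `R`-algebra on the generators. -/
abbrev FA := FreeAlgebra R (LPAGen G)

/-- The generator `g` inside the free algebra. -/
def X (g : LPAGen G) : FA R G := FreeAlgebra.ι R g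

/-- The defining relations of the Leavitt path algebra of an ultragraph. -/
inductive LeavittRel : FA R G → FA R G → Prop
  | proj_empty (h : G.InG0 ∅) : LeavittRel (X R G (.proj ∅ h)) 0
  | proj_mul (A B : Set V) (hA : G.InG0 A) (hB : G.InG0 B) :
      LeavittRel (X R G (.proj A hA) * X R G (.proj B hB))
        (X R G (.proj (A ∩ B) (hA.inter hB)))
  | proj_union (A B : Set V) (hA : G.InG0 A) (hB : G.InG0 B) :
      LeavittRel (X R G (.proj (A ∪ B) (hA.union hB)))
        (X R G (.proj A hA) + X R G (.proj B hB) - X R G (.proj (A ∩ B) (hA.inter hB)))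
  | src_mul (e : E) :
      LeavittRel (X R G (.proj {G.src e} (InG0.vertex (G.src e))) * X R G (.edge e))
        (X R G (.edge e))
  | mul_rng (e : E) :
      LeavittRel (X R G (.edge e) * X R G (.proj (G.rng e) (InG0.range e)))
        (X R G (.edge e))
  | rng_mul_star (e : E) :
      LeavittRel (X R G (.proj (G.rng e) (InG0.range e)) * X R G (.star e))
        (X R G (.star e))
  | star_mul_src (e : E) :
      LeavittRel (X R G (.star e) * X R G (.proj {G.src e} (InG0.vertex (G.src e))))
        (X R G (.star e))
  | star_mul_same (e : E) :
      LeavittRel (X R G (.star e) * X R G (.edge e))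
        (X R G (.proj (G.rng e) (InG0.range e)))
  | star_mul_ne (e f : E) (h : e ≠ f) :
      LeavittRel (X R G (.star e) * X R G (.edge f)) 0
  | ck (v : V) (hfin : {e : E | G.src e = v}.Finite) (hne : {e : E | G.src e = v}.Nonempty) :
      LeavittRel (X R G (.proj {v} (InG0.vertex v)))
        (∑ e ∈ hfin.toFinset, X R G (.edge e) * X R G (.star e))

/-- The (unital) quotient of the free algebra by the Leavitt relations; the Leavitt
path algebra `L_R(𝒢)` sits inside it as the non-unital subalgebra generated by the
generators. -/
abbrev LPABig := RingQuot (LeavittRel R G)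

/-- The image of a generator in the quotient. -/
def gen (g : LPAGen G) : LPABig R G := RingQuot.mkAlgHom R (LeavittRel R G) (X R G g)

/-- `s_e`. -/
def sgen (e : E) : LPABig R G := gen R G (.edge e)

/-- `s_e^*`. -/
def tgen (e : E) : LPABig R G := gen R G (.star e)

/-- `p_A`. -/
def pgen (A : Set V) (hA : G.InG0 A) : LPABig R G := gen R G (.proj A hA)

/-- `s_α` for a finite path `α` (the empty product is `1` in the ambient algebra). -/
def sPath (es : List E) : LPABig R G := (es.map (sgen R G)).prod

/-- `s_β^*` for a finite path `β`. -/
def tPath (es : List E) : LPABig R G := (es.reverse.map (tgen R G)).prod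

/-- The monomial `s_α p_A s_β^*`. -/
def mono (α : List E) (A : Set V) (hA : G.InG0 A) (β : List E) : LPABig R G :=
  sPath R G α * pgen R G A hA * tPath R G β

/-- The `m`-th component of the canonical `ℤ`-grading: all finite `R`-linear combinations
of monomials `s_α p_A s_β^*` with `|α| - |β| = m`. -/
def zComp (m : ℤ) : AddSubgroup (LPABig R G) :=
  AddSubgroup.closure {x | ∃ (l : R) (α β : List E) (A : Set V) (hA : G.InG0 A),
    G.IsPath α ∧ G.IsPath β ∧ (α.length : ℤ) - (β.length : ℤ) = m ∧
    x = l • mono R G α A hA β}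

/-- The element of the free group on the edges determined by a finite path. -/
def pathWord (es : List E) : FreeGroup E := (es.map FreeGroup.of).prod

/-- The `g`-th component of the free-group grading: all finite `R`-linear combinations
of monomials `s_α p_A s_β^*` with `α β⁻¹ = g` in the free group on the edges. -/
def fComp (g : FreeGroup E) : AddSubgroup (LPABig R G) :=
  AddSubgroup.closure {x | ∃ (l : R) (α β : List E) (A : Set V) (hA : G.InG0 A),
    G.IsPath α ∧ G.IsPath β ∧ pathWord α * (pathWord β)⁻¹ = g ∧
    x = l • mono R G α A hA β}

/-- The set of generators inside the quotient. -/
def genSet : Set (LPABig R G) := Set.range (gen R G)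

/-- The Leavitt path algebra `L_R(𝒢)`: the non-unital subalgebra of the quotient
generated by the images of the generators. -/
def LPA : NonUnitalSubalgebra R (LPABig R G) := NonUnitalAlgebra.adjoin R (genSet R G)

/-- `s_e` as an element of `L_R(𝒢)`. -/
def sEl (e : E) : LPA R G :=
  ⟨sgen R G e, NonUnitalAlgebra.subset_adjoin R ⟨LPAGen.edge e, rfl⟩⟩

/-- `s_e^*` as an element of `L_R(𝒢)`. -/
def tEl (e : E) : LPA R G :=
  ⟨tgen R G e, NonUnitalAlgebra.subset_adjoin R ⟨LPAGen.star e, rfl⟩⟩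

/-- `p_A` as an element of `L_R(𝒢)`. -/
def pEl (A : Set V) (hA : G.InG0 A) : LPA R G :=
  ⟨pgen R G A hA, NonUnitalAlgebra.subset_adjoin R ⟨LPAGen.proj A hA, rfl⟩⟩

end Ultragraph

/-- The additive span of the set of products `{a b : a ∈ S, b ∈ T}`. -/
def mulSpan {A : Type} [AddGroup A] [Mul A] (S T : AddSubgroup A) : AddSubgroup A :=
  AddSubgroup.closure {x | ∃ a ∈ S, ∃ b ∈ T, x = a * b}

/-!
Replacing the first `k` edges of an infinite path `p` by a path `α` gives the infinite path
`α ++ₛ p.drop k`, which gains `α.length - k` edges over `p`. If some replacement gains `m`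
edges, Condition (Y) applied to the new path yields a replacement `β` of its first `k'` edges
gaining one more. If `k'` falls inside `α`, then `β` followed by the rest of `α` replaces the
first `k` edges of `p` with gain `m + 1`; otherwise `β` itself replaces the first `k' - m`
edges of `p`.
-/

namespace Stream'

variable {α : Type*}

theorem drop_append_stream_of_le {l : List α} {n : ℕ} (h : n ≤ l.length) (s : Stream' α) :
    drop n (l ++ₛ s) = l.drop n ++ₛ s := by
  have := drop_append_stream (l.take n) (l.drop n ++ₛ s)
  rwa [← append_append_stream, List.take_append_drop, List.length_take_of_le h] at this

theorem drop_append_stream_of_ge {l : List α} {n : ℕ} (h : l.length ≤ n) (s : Stream' α) :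
    drop n (l ++ₛ s) = drop (n - l.length) s := by
  rw [← Nat.add_sub_cancel' h, ← drop_drop, drop_append_stream, Nat.add_sub_cancel_left]

end Stream'

namespace Ultragraph

variable {V E : Type} {G : Ultragraph V E}

theorem isPath_singleton (e : E) : G.IsPath [e] :=
  List.isChain_singleton e

theorem isPath_cons_cons {e f : E} {α : List E} :
    G.IsPath (e :: f :: α) ↔ G.src f ∈ G.rng e ∧ G.IsPath (f :: α) :=
  List.isChain_cons_cons

theorem isInfinitePath_cons {e : E} {p : Stream' E} :
    G.IsInfinitePath (Stream'.cons e p) ↔ G.src (p 0) ∈ G.rng e ∧ G.IsInfinitePath p :=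
  Nat.and_forall_add_one.symm

theorem isInfinitePath_append_stream_iff :
    ∀ {α : List E} (hα : α ≠ []) {p : Stream' E}, G.IsInfinitePath (α ++ₛ p) ↔
      G.IsPath α ∧ G.src (p 0) ∈ G.rng (α.getLast hα) ∧ G.IsInfinitePath p
  | [e], _, p => by simp [Stream'.cons_append_stream, isInfinitePath_cons, isPath_singleton]
  | e :: f :: α, _, p => by
    rw [Stream'.cons_append_stream, isInfinitePath_cons,
      isInfinitePath_append_stream_iff (List.cons_ne_nil f α)]
    simp only [isPath_cons_cons, List.getLast_cons_cons, Stream'.cons_append_stream]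
    exact and_assoc.symm

theorem IsInfinitePath.drop {p : Stream' E} (hp : G.IsInfinitePath p) (k : ℕ) :
    G.IsInfinitePath (p.drop k) := fun i => by
  simpa [Stream'.drop, Stream'.get, Nat.add_right_comm] using hp (i + k)

def Lengthenable (G : Ultragraph V E) (p : Stream' E) (m : ℕ) : Prop :=
  ∃ (k : ℕ) (α : List E), α.length = k + m ∧ G.IsInfinitePath (α ++ₛ p.drop k)

theorem lengthenable_iff {p : Stream' E} (hp : G.IsInfinitePath p) {m : ℕ} (hm : 1 ≤ m) :
    G.Lengthenable p m ↔ ∃ (k : ℕ) (α : List E) (hα : α ≠ []),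
      α.length = k + m ∧ G.IsPath α ∧ G.src (p k) ∈ G.rng (α.getLast hα) := by
  have head_drop (k : ℕ) : p.drop k 0 = p k := Stream'.head_drop p k
  constructor
  · rintro ⟨k, α, hlen, hinf⟩
    have hα : α ≠ [] := List.ne_nil_of_length_pos (by omega)
    obtain ⟨hpath, hsrc, -⟩ := (isInfinitePath_append_stream_iff hα).1 hinf
    exact ⟨k, α, hα, hlen, hpath, head_drop k ▸ hsrc⟩
  · rintro ⟨k, α, hα, hlen, hpath, hsrc⟩
    exact ⟨k, α, hlen, (isInfinitePath_append_stream_iff hα).2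
      ⟨hpath, (head_drop k).symm ▸ hsrc, hp.drop k⟩⟩

theorem Lengthenable.of_append_drop {p : Stream' E} {α : List E} {k m n : ℕ}
    (h : G.Lengthenable (α ++ₛ p.drop k) n) (hα : α.length = k + m) :
    G.Lengthenable p (m + n) := by
  obtain ⟨k', β, hβ, hpath⟩ := h
  rcases le_total k' α.length with hk' | hk'
  · refine ⟨k, β ++ α.drop k', ?_, ?_⟩
    · simp only [List.length_append, List.length_drop]
      omega
    · rwa [Stream'.append_append_stream, ← Stream'.drop_append_stream_of_le hk']
  · refine ⟨k' - m, β, by omega, ?_⟩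
    rwa [Stream'.drop_append_stream_of_ge hk', Stream'.drop_drop, hα,
      show k + (k' - (k + m)) = k' - m by omega] at hpath

theorem conditionY_iff_forall_lengthenable_one :
    G.ConditionY ↔ ∀ p, G.IsInfinitePath p → G.Lengthenable p 1 :=
  forall₂_congr fun _ hp => (lengthenable_iff hp le_rfl).symm

end Ultragraph

open Ultragraph in
theorem conditionY_iff_any_length_general {V E : Type}
    (G : Ultragraph V E) :
    G.ConditionY ↔
      ∀ p : ℕ → E, G.IsInfinitePath p → ∀ m : ℕ, 1 ≤ m →
        ∃ (k : ℕ) (α : List E) (hα : α ≠ []),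
          α.length = k + m ∧ G.IsPath α ∧ G.src (p k) ∈ G.rng (α.getLast hα) := by
  rw [conditionY_iff_forall_lengthenable_one]
  refine ⟨fun hY p hp m hm => (lengthenable_iff hp hm).1 ?_,
    fun h p hp => (lengthenable_iff hp le_rfl).2 (h p hp 1 le_rfl)⟩
  induction m, hm using Nat.le_induction with
  | base => exact hY p hp
  | succ m _ ih =>
    obtain ⟨k, α, hlen, hα⟩ := ih
    exact (hY _ hα).of_append_drop hlen

open Ultragraph in
/-- an ultragraph satisfies Condition (Y) iff for every infinite path and
every `m ≥ 1` one can replace an initial segment of length `k` by a path of length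
`k + m` and still obtain an infinite path. -/
theorem conditionY_iff_any_length {V E : Type} [Countable V] [Countable E]
    (G : Ultragraph V E) :
    G.ConditionY ↔
      ∀ p : ℕ → E, G.IsInfinitePath p → ∀ m : ℕ, 1 ≤ m →
        ∃ (k : ℕ) (α : List E) (hα : α ≠ []),
          α.length = k + m ∧ G.IsPath α ∧ G.src (p k) ∈ G.rng (α.getLast hα) :=
  conditionY_iff_any_length_general G
end

section
/- Let 𝒢 be an ultragraph such that r(e) is an infinite set for some edge e ∈ 𝒢¹, and let R be a nonzero unital commutative ring. Then L_R(𝒢), with the canonical ℤ-grading {L_R(𝒢)_m}_{m∈ℤ}, is not strongly ℤ-graded. -/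
/-! If `L_R(𝒢)_1 L_R(𝒢)_{-1} = L_R(𝒢)_0`, then `p_{r(e)}` is a sum of products `x y` with
`x` of degree `1`, and every monomial of positive degree begins with some `s_f`. Since
`p_v s_f = 0` unless `v = s(f)`, only finitely many vertex projections `p_v` can fail to kill
`p_{r(e)}` from the left. But `p_v p_{r(e)} = p_v ≠ 0` for every `v ∈ r(e)`; that `p_v ≠ 0` is
seen by letting `L_R(𝒢)` act on functions on the boundary paths of `𝒢`. -/

def AddSubgroup.finiteSupport {ι M N : Type*} [AddGroup M] [AddGroup N] (φ : ι → M →+ N) :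
    AddSubgroup M where
  carrier := {x | (Function.support fun i => φ i x).Finite}
  zero_mem' := by simp
  add_mem' {a b} ha hb :=
    (ha.union hb).subset (by simp only [map_add]; exact Function.support_add _ _)
  neg_mem' {a} ha := by simpa using ha

section PullbackOn

variable {P R : Type} [Semiring R]

open Classical in
noncomputable def pullbackOn (p : P → Prop) (τ : ∀ b, p b → P) : Module.End R (P → R) where
  toFun f b := if h : p b then f (τ b h) else 0
  map_add' f g := funext fun b => by dsimp only [Pi.add_apply]; split_ifs <;> simp
  map_smul' c f := funext fun b => by dsimp only [Pi.smul_apply]; split_ifs <;> simp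

open Classical in
theorem pullbackOn_apply (p : P → Prop) (τ : ∀ b, p b → P) (f : P → R) (b : P) :
    pullbackOn p τ f b = if h : p b then f (τ b h) else 0 := rfl

end PullbackOn

namespace Ultragraph

variable {V E : Type} (G : Ultragraph V E)

def IsSingular (v : V) : Prop :=
  ¬ ({f : E | G.src f = v}.Finite ∧ {f : E | G.src f = v}.Nonempty)

theorem exists_src_eq_of_not_isSingular {v : V} (h : ¬ G.IsSingular v) : ∃ f, G.src f = v :=
  (not_not.mp h).2

def letterSrc : E ⊕ V → V
  | .inl f => G.src f
  | .inr t => t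

def Follows : E ⊕ V → E ⊕ V → Prop
  | .inl e, x => G.letterSrc x ∈ G.rng e
  | .inr t, x => x = .inr t ∧ G.IsSingular t

/-- A finite path `e₁ ⋯ eₙ` ending at a singular vertex `t` is encoded as
`e₁, …, eₙ, t, t, …`, an infinite path as its sequence of edges. -/
def BoundaryPath : Type := {b : ℕ → E ⊕ V // ∀ i, G.Follows (b i) (b (i + 1))}

namespace BoundaryPath

variable {G}

def head (b : G.BoundaryPath) : E ⊕ V := b.1 0

def source (b : G.BoundaryPath) : V := G.letterSrc b.head

def tail (b : G.BoundaryPath) : G.BoundaryPath := ⟨fun n => b.1 (n + 1), fun i => b.2 (i + 1)⟩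

def cons (e : E) (b : G.BoundaryPath) (h : b.source ∈ G.rng e) : G.BoundaryPath :=
  ⟨fun | 0 => .inl e | n + 1 => b.1 n, fun | 0 => h | i + 1 => b.2 i⟩

@[simp] theorem head_cons (e : E) (b : G.BoundaryPath) (h : b.source ∈ G.rng e) :
    (b.cons e h).head = .inl e := rfl

@[simp] theorem tail_cons (e : E) (b : G.BoundaryPath) (h : b.source ∈ G.rng e) :
    (b.cons e h).tail = b := rfl

@[simp] theorem source_cons (e : E) (b : G.BoundaryPath) (h : b.source ∈ G.rng e) :
    (b.cons e h).source = G.src e := rfl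

theorem source_eq_of_head_eq {b : G.BoundaryPath} {e : E} (hb : b.head = .inl e) :
    b.source = G.src e := by
  rw [source, hb, letterSrc]

theorem source_tail_mem {b : G.BoundaryPath} {e : E} (hb : b.head = .inl e) :
    b.tail.source ∈ G.rng e := by
  have := b.2 0
  rwa [← head, hb] at this

theorem cons_tail {b : G.BoundaryPath} {e : E} (hb : b.head = .inl e)
    (h : b.tail.source ∈ G.rng e) : b.tail.cons e h = b := by
  refine Subtype.ext (funext fun n => ?_)
  cases n
  · exact hb.symm
  · rfl

theorem isSingular_source {b : G.BoundaryPath} {t : V} (hb : b.head = .inr t) :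
    G.IsSingular b.source := by
  have := b.2 0
  rw [← head, hb] at this
  rw [source, hb]
  exact this.2

end BoundaryPath

open Classical in
/-- The first letter of the boundary path from `v` that leaves every regular vertex along a
chosen edge. -/
noncomputable def firstLetter (v : V) : E ⊕ V :=
  if h : G.IsSingular v then .inr v else .inl (G.exists_src_eq_of_not_isSingular h).choose

noncomputable def nextVertex (v : V) : V :=
  match G.firstLetter v with
  | .inl f => (G.rng_nonempty f).some
  | .inr t => t

theorem letterSrc_firstLetter (v : V) : G.letterSrc (G.firstLetter v) = v := by
  unfold firstLetter
  split_ifs with h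
  · rfl
  · exact (G.exists_src_eq_of_not_isSingular h).choose_spec

theorem follows_firstLetter (v : V) :
    G.Follows (G.firstLetter v) (G.firstLetter (G.nextVertex v)) := by
  by_cases hv : G.IsSingular v
  · have hfirst : G.firstLetter v = .inr v := dif_pos hv
    have hnext : G.nextVertex v = v := by rw [nextVertex, hfirst]
    rw [hnext, hfirst]
    exact ⟨rfl, hv⟩
  · obtain ⟨f, hfirst⟩ : ∃ f, G.firstLetter v = .inl f := ⟨_, dif_neg hv⟩
    rw [nextVertex, hfirst, Follows, letterSrc_firstLetter]
    exact (G.rng_nonempty f).some_mem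

theorem exists_boundaryPath_source_eq (v : V) : ∃ b : G.BoundaryPath, b.source = v :=
  ⟨⟨fun n => G.firstLetter (G.nextVertex^[n] v), fun i => by
    dsimp only
    rw [Function.iterate_succ_apply']
    exact G.follows_firstLetter _⟩, G.letterSrc_firstLetter v⟩

section

variable (R : Type) [CommRing R]

/-- `s_e` deletes a leading `e` and `s_e^*` prepends `e`: the transpose of the usual
boundary-path representation. -/
noncomputable def genOp : G.LPAGen → Module.End R (G.BoundaryPath → R)
  | .edge e => pullbackOn (fun b => b.head = .inl e) fun b _ => b.tail
  | .star e => pullbackOn (fun b => b.source ∈ G.rng e) fun b h => b.cons e h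
  | .proj A _ => pullbackOn (fun b => b.source ∈ A) fun b _ => b

theorem genOp_respects {a a' : FA R G} (h : LeavittRel R G a a') :
    FreeAlgebra.lift R (G.genOp R) a = FreeAlgebra.lift R (G.genOp R) a' := by
  classical
  refine LinearMap.ext fun φ => funext fun b => ?_
  induction h <;>
    simp only [X, map_mul, map_add, map_sub, map_sum, map_zero, FreeAlgebra.lift_ι_apply, genOp,
      Module.End.mul_apply, LinearMap.add_apply, LinearMap.sub_apply, LinearMap.sum_apply,
      LinearMap.zero_apply, Pi.add_apply, Pi.sub_apply, Finset.sum_apply, Pi.zero_apply,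
      pullbackOn_apply]
  case proj_empty => simp
  case proj_mul A B _ _ => by_cases hA : b.source ∈ A <;> simp [hA]
  case proj_union A B _ _ =>
    by_cases hA : b.source ∈ A <;> by_cases hB : b.source ∈ B <;> simp [hA, hB]
  case src_mul e =>
    by_cases hb : b.head = .inl e
    · simp [BoundaryPath.source_eq_of_head_eq hb]
    · simp [hb]
  case mul_rng e =>
    by_cases hb : b.head = .inl e
    · simp [hb, BoundaryPath.source_tail_mem hb]
    · simp [hb]
  case rng_mul_star e => split_ifs <;> rfl
  case star_mul_src e => simp
  case star_mul_same e => simp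
  case star_mul_ne e f hne => simp [hne]
  case ck v hfin hne =>
    rcases hb : b.head with g | t
    · simp [BoundaryPath.source_eq_of_head_eq hb, BoundaryPath.source_tail_mem hb,
        BoundaryPath.cons_tail hb, Finset.sum_ite_eq]
    · have hsing := BoundaryPath.isSingular_source hb
      have hv : b.source ≠ v := fun hv => hsing (hv ▸ ⟨hfin, hne⟩)
      simp [hv]

noncomputable def leavittRep : LPABig R G →ₐ[R] Module.End R (G.BoundaryPath → R) :=
  RingQuot.liftAlgHom R ⟨FreeAlgebra.lift R (G.genOp R), fun _ _ h => G.genOp_respects R h⟩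

theorem pgen_vertex_ne_zero [Nontrivial R] (v : V) : pgen R G {v} (InG0.vertex v) ≠ 0 := by
  intro hv
  obtain ⟨b, hb⟩ := G.exists_boundaryPath_source_eq v
  have := congrArg (fun x => G.leavittRep R x (fun _ => 1) b) hv
  simp [pgen, gen, leavittRep, X, genOp, pullbackOn_apply, hb] at this

theorem pgen_mul_pgen {A B : Set V} (hA : G.InG0 A) (hB : G.InG0 B) :
    pgen R G A hA * pgen R G B hB = pgen R G (A ∩ B) (hA.inter hB) := by
  rw [pgen, pgen, pgen, gen, gen, gen, ← map_mul]
  exact RingQuot.mkAlgHom_rel R (LeavittRel.proj_mul A B hA hB)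

theorem pgen_empty (h : G.InG0 ∅) : pgen R G ∅ h = 0 := by
  simpa [pgen, gen] using RingQuot.mkAlgHom_rel R (LeavittRel.proj_empty (R := R) (G := G) h)

theorem pgen_src_mul_sgen (f : E) :
    pgen R G {G.src f} (InG0.vertex (G.src f)) * sgen R G f = sgen R G f := by
  rw [pgen, sgen, gen, gen, ← map_mul]
  exact RingQuot.mkAlgHom_rel R (LeavittRel.src_mul f)

theorem pgen_vertex_mul_sgen_of_ne {v : V} {f : E} (hv : v ≠ G.src f) :
    pgen R G {v} (InG0.vertex v) * sgen R G f = 0 := by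
  have hdisj : ({v} : Set V) ∩ {G.src f} = ∅ := Set.singleton_inter_eq_empty.mpr hv
  have hempty : G.InG0 ∅ := hdisj ▸ (InG0.vertex v).inter (InG0.vertex (G.src f))
  rw [← pgen_src_mul_sgen, ← mul_assoc, pgen_mul_pgen]
  convert zero_mul (sgen R G f)
  convert G.pgen_empty R hempty

noncomputable abbrev vertexFinite : AddSubgroup (LPABig R G) :=
  AddSubgroup.finiteSupport fun v => AddMonoidHom.mulLeft (pgen R G {v} (InG0.vertex v))

theorem sgen_mul_mem_vertexFinite (f : E) (y : LPABig R G) : sgen R G f * y ∈ G.vertexFinite R :=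
  (Set.finite_singleton (G.src f)).subset fun v hv => by
    by_contra hvf
    apply hv
    simp [← mul_assoc, G.pgen_vertex_mul_sgen_of_ne R hvf]

theorem mono_cons (f : E) (α : List E) (A : Set V) (hA : G.InG0 A) (β : List E) :
    mono R G (f :: α) A hA β = sgen R G f * mono R G α A hA β := by
  simp only [mono, sPath, List.map_cons, List.prod_cons, mul_assoc]

theorem mulSpan_zComp_le_vertexFinite {m : ℤ} (hm : 0 < m) (T : AddSubgroup (LPABig R G)) :
    mulSpan (zComp R G m) T ≤ G.vertexFinite R := by
  refine (AddSubgroup.closure_le _).mpr ?_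
  rintro _ ⟨x, hx, y, -, rfl⟩
  suffices zComp R G m ≤ (G.vertexFinite R).comap (AddMonoidHom.mulRight y) from this hx
  refine (AddSubgroup.closure_le _).mpr ?_
  rintro _ ⟨l, α, β, A, hA, -, -, hlen, rfl⟩
  obtain ⟨f, α, rfl⟩ : ∃ f α', α = f :: α' := by
    cases α with
    | nil => simp at hlen; omega
    | cons f α => exact ⟨f, α, rfl⟩
  have := G.sgen_mul_mem_vertexFinite R f (l • mono R G α A hA β * y)
  simpa [mono_cons, mul_assoc] using this

theorem pgen_rng_mem_zComp_zero (e : E) : pgen R G (G.rng e) (InG0.range e) ∈ zComp R G 0 :=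
  AddSubgroup.subset_closure
    ⟨1, [], [], G.rng e, InG0.range e, List.isChain_nil, List.isChain_nil, by simp,
      by simp [mono, sPath, tPath]⟩

theorem pgen_rng_notMem_vertexFinite [Nontrivial R] {e : E} (he : (G.rng e).Infinite) :
    pgen R G (G.rng e) (InG0.range e) ∉ G.vertexFinite R := fun hfin =>
  he (hfin.subset fun v hv => by
    simp only [Function.mem_support, AddMonoidHom.coe_mulLeft, pgen_mul_pgen]
    convert G.pgen_vertex_ne_zero R v using 2
    exact Set.singleton_inter_of_mem hv)

end

end Ultragraph

open Ultragraph in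
theorem not_stronglyZGraded_of_infinite_range_general {V E : Type}
    (G : Ultragraph V E) (e : E) (he : (G.rng e).Infinite)
    (R : Type) [CommRing R] [Nontrivial R] :
    ¬ (∀ m n : ℤ, mulSpan (zComp R G m) (zComp R G n) = zComp R G (m + n)) := by
  intro hstrong
  have hdeg0 : pgen R G (G.rng e) (InG0.range e) ∈ mulSpan (zComp R G 1) (zComp R G (-1)) := by
    rw [hstrong]
    exact G.pgen_rng_mem_zComp_zero R e
  exact G.pgen_rng_notMem_vertexFinite R he (G.mulSpan_zComp_le_vertexFinite R one_pos _ hdeg0)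

open Ultragraph in
/-- if some edge has infinite range then `L_R(𝒢)` is not strongly
`ℤ`-graded with respect to the canonical grading. -/
theorem not_stronglyZGraded_of_infinite_range {V E : Type} [Countable V] [Countable E]
    (G : Ultragraph V E) (e : E) (he : (G.rng e).Infinite)
    (R : Type) [CommRing R] [Nontrivial R] :
    ¬ (∀ m n : ℤ, mulSpan (zComp R G m) (zComp R G n) = zComp R G (m + n)) :=
  not_stronglyZGraded_of_infinite_range_general G e he R
end
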